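/- arXiv:1506.04570 — 7 statements merged into one kernel-verified Lean document; each statement's English description precedes it below -/
import Mathlib

section
/- Let f : ℝ → ℝ be continuous and nonnegative and let y > 0 satisfy f(y) + 2·f(2y) > 0. Then, as ε → 0⁺, the ratio (−(1/2)∫_{y−ε}^{y+ε} x·f(x) dx + (1/2)∫_{2y−2ε}^{2y+2ε} x·f(x) dx) / (∫_{y−ε}^{y+ε} f(x) dx + ∫_{2y−2ε}^{2y+2ε} f(x) dx) tends to (−y·f(y) + 4y·f(2y)) / (2·f(y) + 4·f(2y)). -/
/-!
Both the numerator and the denominator are sums of integrals over intervals shrinking to `y` and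
`2y`. By the fundamental theorem of calculus, `ε⁻¹ ∫_{a-cε}^{a+cε} g → 2c g(a)` for continuous `g`,
so after dividing numerator and denominator by `ε` both converge, and the denominator's limit
`2 f(y) + 4 f(2y)` is nonzero.
-/

open Filter Topology

theorem Continuous.tendsto_intervalIntegral_div_nhdsGT_zero {g : ℝ → ℝ} (hg : Continuous g)
    (a c : ℝ) :
    Tendsto (fun ε => (∫ x in (a - c * ε)..(a + c * ε), g x) / ε) (𝓝[>] 0)
      (𝓝 (2 * c * g a)) := by
  set G : ℝ → ℝ := fun t => ∫ x in a..t, g x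
  have hG : ∀ t, HasDerivAt G (g t) t := fun t => (hg.integral_hasStrictDerivAt a t).hasDerivAt
  have hupper : HasDerivAt (fun ε => G (a + c * ε)) (g a * c) 0 := by
    simpa [Function.comp_def] using
      (hG (a + c * 0)).comp 0 (((hasDerivAt_id 0).const_mul c).const_add a)
  have hlower : HasDerivAt (fun ε => G (a - c * ε)) (g a * -c) 0 := by
    simpa [Function.comp_def] using
      (hG (a - c * 0)).comp 0 (((hasDerivAt_id 0).const_mul c).const_sub a)
  have hdiff : HasDerivAt (fun ε => G (a + c * ε) - G (a - c * ε)) (2 * c * g a) 0 :=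
    (hupper.sub hlower).congr_deriv (by ring)
  refine hdiff.tendsto_slope_zero_right.congr fun ε => ?_
  rw [intervalIntegral.integral_interval_sub_left (hg.intervalIntegrable _ _)
    (hg.intervalIntegrable _ _)]
  simp [G, div_eq_inv_mul]

theorem Filter.Tendsto.div_of_tendsto_div_div {α : Type*} {l : Filter α} {u v w : α → ℝ}
    {a b : ℝ} (hu : Tendsto (fun t => u t / w t) l (𝓝 a))
    (hv : Tendsto (fun t => v t / w t) l (𝓝 b)) (hb : b ≠ 0) (hw : ∀ᶠ t in l, w t ≠ 0) :
    Tendsto (fun t => u t / v t) l (𝓝 (a / b)) :=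
  (hu.div hv hb).congr' <| hw.mono fun _ ht => div_div_div_cancel_right₀ ht _ _

theorem halving_only_expected_benefit_general (f : ℝ → ℝ) (hf : Continuous f) (y : ℝ)
    (hpos : 0 < f y + 2 * f (2 * y)) :
    Tendsto (fun ε : ℝ =>
        (-(1 / 2) * (∫ x in (y - ε)..(y + ε), x * f x) +
            (1 / 2) * ∫ x in (2 * y - 2 * ε)..(2 * y + 2 * ε), x * f x) /
          ((∫ x in (y - ε)..(y + ε), f x) +
            ∫ x in (2 * y - 2 * ε)..(2 * y + 2 * ε), f x))
      (nhdsWithin 0 (Set.Ioi 0))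
      (nhds ((-y * f y + 4 * y * f (2 * y)) / (2 * f y + 4 * f (2 * y)))) := by
  have hxf : Continuous fun x => x * f x := continuous_id.mul hf
  have near (g : ℝ → ℝ) (hg : Continuous g) :
      Tendsto (fun ε => (∫ x in (y - ε)..(y + ε), g x) / ε) (𝓝[>] 0) (𝓝 (2 * g y)) := by
    simpa using hg.tendsto_intervalIntegral_div_nhdsGT_zero y 1
  have far (g : ℝ → ℝ) (hg : Continuous g) :
      Tendsto (fun ε => (∫ x in (2 * y - 2 * ε)..(2 * y + 2 * ε), g x) / ε) (𝓝[>] 0)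
        (𝓝 (4 * g (2 * y))) := by
    convert hg.tendsto_intervalIntegral_div_nhdsGT_zero (2 * y) 2 using 2
    ring
  refine Tendsto.div_of_tendsto_div_div (w := fun ε => ε) ?_ ?_ (by linarith)
    (eventually_mem_nhdsWithin.mono fun _ hε => ne_of_gt hε)
  · convert ((near _ hxf).const_mul (-(1 / 2))).add ((far _ hxf).const_mul (1 / 2)) using 2 <;>
      ring
  · simpa only [add_div] using (near f hf).add (far f hf)

/-- Halving-only strategy: the expected benefit of switching, given the observed
content lies in `(y - ε, y + ε]`, tends to
`(-y f(y) + 4y f(2y)) / (2 f(y) + 4 f(2y))` as `ε → 0⁺`. -/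
theorem halving_only_expected_benefit (f : ℝ → ℝ) (hf : Continuous f)
    (hf0 : ∀ x, 0 ≤ f x) (y : ℝ) (hy : 0 < y)
    (hpos : 0 < f y + 2 * f (2 * y)) :
    Tendsto (fun ε : ℝ =>
        (-(1 / 2) * (∫ x in (y - ε)..(y + ε), x * f x) +
            (1 / 2) * ∫ x in (2 * y - 2 * ε)..(2 * y + 2 * ε), x * f x) /
          ((∫ x in (y - ε)..(y + ε), f x) +
            ∫ x in (2 * y - 2 * ε)..(2 * y + 2 * ε), f x))
      (nhdsWithin 0 (Set.Ioi 0))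
      (nhds ((-y * f y + 4 * y * f (2 * y)) / (2 * f y + 4 * f (2 * y)))) :=
  halving_only_expected_benefit_general f hf y hpos
end

section
/- Let f : ℝ → ℝ be continuous and nonnegative and let y > 0 satisfy f(y/2) + 4·f(y) + 4·f(2y) > 0. Then, as ε → 0⁺, the ratio (−∫_{y/2−ε/2}^{y/2+ε/2} x·f(x) dx + (1/2)∫_{y−ε}^{y+ε} x·f(x) dx + (1/2)∫_{2y−2ε}^{2y+2ε} x·f(x) dx) / (∫_{y/2−ε/2}^{y/2+ε/2} f(x) dx + 2∫_{y−ε}^{y+ε} f(x) dx + ∫_{2y−2ε}^{2y+2ε} f(x) dx) tends to (−(y/2)·f(y/2) + y·f(y) + 4y·f(2y)) / (f(y/2) + 4·f(y) + 4·f(2y)). -/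
/-! Numerator and denominator, as functions of `ε`, vanish at `ε = 0` and, by the fundamental
theorem of calculus, are differentiable there with derivatives exactly
`-(y/2) f(y/2) + y f(y) + 4y f(2y)` and `f(y/2) + 4 f(y) + 4 f(2y)`, so the limit is their quotient
(l'Hôpital's rule at a single point). -/

open MeasureTheory Filter Topology

theorem hasDerivAt_intervalIntegral_of_hasDerivAt_bounds {g u v : ℝ → ℝ} {u' v' t : ℝ}
    (hg : Continuous g) (hu : HasDerivAt u u' t) (hv : HasDerivAt v v' t) :
    HasDerivAt (fun s => ∫ x in u s..v s, g x) (g (v t) * v' - g (u t) * u') t := by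
  have hF : ∀ b, HasDerivAt (fun b => ∫ x in (0 : ℝ)..b, g x) (g b) b := fun b =>
    (hg.integral_hasStrictDerivAt 0 b).hasDerivAt
  have hsplit : (fun s => ∫ x in u s..v s, g x) =
      fun s => (∫ x in (0 : ℝ)..v s, g x) - ∫ x in (0 : ℝ)..u s, g x := by
    ext s
    rw [intervalIntegral.integral_interval_sub_left (hg.intervalIntegrable _ _)
      (hg.intervalIntegrable _ _)]
  rw [hsplit]
  exact ((hF (v t)).comp t hv).sub ((hF (u t)).comp t hu)

theorem hasDerivAt_intervalIntegral_symm {g h : ℝ → ℝ} {c : ℝ} (hg : Continuous g)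
    (hh : HasDerivAt h c 0) (h0 : h 0 = 0) (a : ℝ) :
    HasDerivAt (fun ε => ∫ x in (a - h ε)..(a + h ε), g x) (2 * c * g a) 0 := by
  convert hasDerivAt_intervalIntegral_of_hasDerivAt_bounds hg (hh.const_sub a)
    (hh.const_add a) using 1
  rw [h0, sub_zero, add_zero]
  ring

theorem tendsto_div_of_hasDerivAt_of_eq_zero {f g : ℝ → ℝ} {f' g' a : ℝ}
    (hf : HasDerivAt f f' a) (hg : HasDerivAt g g' a) (hfa : f a = 0) (hga : g a = 0)
    (hg' : g' ≠ 0) : Tendsto (fun x => f x / g x) (𝓝[≠] a) (𝓝 (f' / g')) := by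
  refine ((hasDerivAt_iff_tendsto_slope.mp hf).div (hasDerivAt_iff_tendsto_slope.mp hg)
    hg').congr' ?_
  filter_upwards [self_mem_nhdsWithin] with x (hx : x ≠ a)
  rw [Pi.div_apply, slope_def_field, slope_def_field, hfa, hga, sub_zero, sub_zero,
    div_div_div_cancel_right₀ (sub_ne_zero.mpr hx)]

theorem halving_or_doubling_expected_benefit_general (f : ℝ → ℝ) (hf : Continuous f)
    (y : ℝ)
    (hpos : 0 < f (y / 2) + 4 * f y + 4 * f (2 * y)) :
    Tendsto (fun ε : ℝ =>
        (-(∫ x in (y / 2 - ε / 2)..(y / 2 + ε / 2), x * f x) +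
            (1 / 2) * (∫ x in (y - ε)..(y + ε), x * f x) +
            (1 / 2) * ∫ x in (2 * y - 2 * ε)..(2 * y + 2 * ε), x * f x) /
          ((∫ x in (y / 2 - ε / 2)..(y / 2 + ε / 2), f x) +
            2 * (∫ x in (y - ε)..(y + ε), f x) +
            ∫ x in (2 * y - 2 * ε)..(2 * y + 2 * ε), f x))
      (nhdsWithin 0 (Set.Ioi 0))
      (nhds ((-(y / 2) * f (y / 2) + y * f y + 4 * y * f (2 * y)) /
        (f (y / 2) + 4 * f y + 4 * f (2 * y)))) := by
  have hxf : Continuous fun x : ℝ => x * f x := continuous_id.mul hf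
  have hε := hasDerivAt_id' (0 : ℝ)
  have hhalf := hε.div_const 2
  have hdouble := hε.const_mul 2
  have hN := ((hasDerivAt_intervalIntegral_symm hxf hhalf (zero_div 2) (y / 2)).neg.add
      ((hasDerivAt_intervalIntegral_symm hxf hε rfl y).const_mul (1 / 2))).add
    ((hasDerivAt_intervalIntegral_symm hxf hdouble (mul_zero 2) (2 * y)).const_mul (1 / 2))
  have hD := ((hasDerivAt_intervalIntegral_symm hf hhalf (zero_div 2) (y / 2)).add
      ((hasDerivAt_intervalIntegral_symm hf hε rfl y).const_mul 2)).add
    (hasDerivAt_intervalIntegral_symm hf hdouble (mul_zero 2) (2 * y))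
  have hlim := tendsto_div_of_hasDerivAt_of_eq_zero hN hD (by simp) (by simp) (by linarith)
  convert hlim.mono_left (nhdsGT_le_nhdsNE 0) using 2
  · rfl
  · congr 1 <;> ring

/-- Halving-or-doubling strategy: the expected benefit of switching, given the
observed content lies in `(y - ε, y + ε]`, tends to
`(-(y/2) f(y/2) + y f(y) + 4y f(2y)) / (f(y/2) + 4 f(y) + 4 f(2y))` as `ε → 0⁺`. -/
theorem halving_or_doubling_expected_benefit (f : ℝ → ℝ) (hf : Continuous f)
    (hf0 : ∀ x, 0 ≤ f x) (y : ℝ) (hy : 0 < y)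
    (hpos : 0 < f (y / 2) + 4 * f y + 4 * f (2 * y)) :
    Tendsto (fun ε : ℝ =>
        (-(∫ x in (y / 2 - ε / 2)..(y / 2 + ε / 2), x * f x) +
            (1 / 2) * (∫ x in (y - ε)..(y + ε), x * f x) +
            (1 / 2) * ∫ x in (2 * y - 2 * ε)..(2 * y + 2 * ε), x * f x) /
          ((∫ x in (y / 2 - ε / 2)..(y / 2 + ε / 2), f x) +
            2 * (∫ x in (y - ε)..(y + ε), f x) +
            ∫ x in (2 * y - 2 * ε)..(2 * y + 2 * ε), f x))
      (nhdsWithin 0 (Set.Ioi 0))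
      (nhds ((-(y / 2) * f (y / 2) + y * f y + 4 * y * f (2 * y)) /
        (f (y / 2) + 4 * f y + 4 * f (2 * y)))) :=
  halving_or_doubling_expected_benefit_general f hf y hpos
end

section
/- Let f : ℝ → ℝ be continuous and nonnegative and let y > 0 satisfy f(y/2) + 4·f(2y) > 0. Then, as ε → 0⁺, the ratio ((1/2)∫_{2y−2ε}^{2y+2ε} x·f(x) dx − ∫_{y/2−ε/2}^{y/2+ε/2} x·f(x) dx) / (∫_{2y−2ε}^{2y+2ε} f(x) dx + ∫_{y/2−ε/2}^{y/2+ε/2} f(x) dx) tends to (−(y/2)·f(y/2) + 4y·f(2y)) / (f(y/2) + 4·f(2y)); moreover this limit is strictly positive if and only if 8·f(2y) > f(y/2). -/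
/-!
Both numerator and denominator vanish at `ε = 0` and, by the fundamental theorem of calculus,
are differentiable there: a window `[a - cε, a + cε]` contributes `2c · h(a)` to the derivative.
The ratio therefore tends to the ratio of the derivatives, which is the stated limit. Its sign is
that of `-(y/2) f(y/2) + 4y f(2y) = (y/2) (8 f(2y) - f(y/2))`.
-/

open MeasureTheory Filter Topology intervalIntegral

theorem hasDerivAt_intervalIntegral_comp {h u v : ℝ → ℝ} {u' v' x : ℝ} (hh : Continuous h)
    (hu : HasDerivAt u u' x) (hv : HasDerivAt v v' x) :
    HasDerivAt (fun t => ∫ s in u t..v t, h s) (h (v x) * v' - h (u x) * u') x := by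
  have hF : ∀ b, HasDerivAt (fun b => ∫ s in (0 : ℝ)..b, h s) (h b) b := fun b =>
    (hh.integral_hasStrictDerivAt 0 b).hasDerivAt
  refine ((hF (v x)).comp x hv |>.sub ((hF (u x)).comp x hu)).congr_of_eventuallyEq ?_
  filter_upwards with t
  exact (integral_interval_sub_left (hh.intervalIntegrable _ _) (hh.intervalIntegrable _ _)).symm

theorem hasDerivAt_intervalIntegral_window {h : ℝ → ℝ} (hh : Continuous h) (a c : ℝ) :
    HasDerivAt (fun ε => ∫ s in (a - c * ε)..(a + c * ε), h s) (2 * c * h a) 0 := by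
  have hlo : HasDerivAt (fun ε => a - c * ε) (-c) 0 := by
    simpa using ((hasDerivAt_id (0 : ℝ)).const_mul c).const_sub a
  have hhi : HasDerivAt (fun ε => a + c * ε) c 0 := by
    simpa using ((hasDerivAt_id (0 : ℝ)).const_mul c).const_add a
  convert hasDerivAt_intervalIntegral_comp hh hlo hhi using 1
  simp only [mul_zero, sub_zero, add_zero]
  ring

theorem tendsto_div_of_hasDerivAt_of_eq_zero_s6 {N D : ℝ → ℝ} {x n d : ℝ}
    (hN : HasDerivAt N n x) (hD : HasDerivAt D d x) (hN0 : N x = 0) (hD0 : D x = 0)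
    (hd : d ≠ 0) : Tendsto (fun t => N t / D t) (𝓝[≠] x) (𝓝 (n / d)) := by
  refine ((hasDerivAt_iff_tendsto_slope.mp hN).div (hasDerivAt_iff_tendsto_slope.mp hD) hd).congr'
    ?_
  filter_upwards [self_mem_nhdsWithin] with t ht
  rw [Pi.div_apply, slope_def_field, slope_def_field, hN0, hD0, sub_zero, sub_zero,
    div_div_div_cancel_right₀ (sub_ne_zero.mpr ht)]

theorem allocate_second_expected_benefit_general (f : ℝ → ℝ) (hf : Continuous f)
    (y : ℝ) (hy : 0 < y)
    (hpos : 0 < f (y / 2) + 4 * f (2 * y)) :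
    Tendsto (fun ε : ℝ =>
        ((1 / 2) * (∫ x in (2 * y - 2 * ε)..(2 * y + 2 * ε), x * f x) -
            ∫ x in (y / 2 - ε / 2)..(y / 2 + ε / 2), x * f x) /
          ((∫ x in (2 * y - 2 * ε)..(2 * y + 2 * ε), f x) +
            ∫ x in (y / 2 - ε / 2)..(y / 2 + ε / 2), f x))
      (nhdsWithin 0 (Set.Ioi 0))
      (nhds ((-(y / 2) * f (y / 2) + 4 * y * f (2 * y)) / (f (y / 2) + 4 * f (2 * y)))) ∧
    (0 < (-(y / 2) * f (y / 2) + 4 * y * f (2 * y)) / (f (y / 2) + 4 * f (2 * y)) ↔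
      f (y / 2) < 8 * f (2 * y)) := by
  have hxf : Continuous fun x => x * f x := continuous_id.mul hf
  have hN : HasDerivAt (fun ε => (1 / 2) * (∫ x in (2 * y - 2 * ε)..(2 * y + 2 * ε), x * f x) -
      ∫ x in (y / 2 - 1 / 2 * ε)..(y / 2 + 1 / 2 * ε), x * f x)
      (-(y / 2) * f (y / 2) + 4 * y * f (2 * y)) 0 :=
    (((hasDerivAt_intervalIntegral_window hxf (2 * y) 2).const_mul (1 / 2)).sub
      (hasDerivAt_intervalIntegral_window hxf (y / 2) (1 / 2))).congr_deriv (by ring)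
  have hD : HasDerivAt (fun ε => (∫ x in (2 * y - 2 * ε)..(2 * y + 2 * ε), f x) +
      ∫ x in (y / 2 - 1 / 2 * ε)..(y / 2 + 1 / 2 * ε), f x) (f (y / 2) + 4 * f (2 * y)) 0 :=
    ((hasDerivAt_intervalIntegral_window hf (2 * y) 2).add
      (hasDerivAt_intervalIntegral_window hf (y / 2) (1 / 2))).congr_deriv (by ring)
  refine ⟨?_, ?_⟩
  · refine ((tendsto_div_of_hasDerivAt_of_eq_zero_s6 hN hD (by simp) (by simp) hpos.ne').mono_left
      (nhdsWithin_mono 0 fun _ hε => hε.ne')).congr fun ε => ?_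
    rw [show ε / 2 = 1 / 2 * ε by ring]
  · have hnum : -(y / 2) * f (y / 2) + 4 * y * f (2 * y) =
        y / 2 * (8 * f (2 * y) - f (y / 2)) := by ring
    rw [div_pos_iff_of_pos_right hpos, hnum, mul_pos_iff_of_pos_left (half_pos hy), sub_pos]

/-- Allocate-the-second-envelope strategy: the expected benefit of switching, given
the observed content lies in `(y - ε, y + ε]`, tends to
`(-(y/2) f(y/2) + 4y f(2y)) / (f(y/2) + 4 f(2y))` as `ε → 0⁺`; this limit is
strictly positive iff `8 f(2y) > f(y/2)`. -/
theorem allocate_second_expected_benefit (f : ℝ → ℝ) (hf : Continuous f)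
    (hf0 : ∀ x, 0 ≤ f x) (y : ℝ) (hy : 0 < y)
    (hpos : 0 < f (y / 2) + 4 * f (2 * y)) :
    Tendsto (fun ε : ℝ =>
        ((1 / 2) * (∫ x in (2 * y - 2 * ε)..(2 * y + 2 * ε), x * f x) -
            ∫ x in (y / 2 - ε / 2)..(y / 2 + ε / 2), x * f x) /
          ((∫ x in (2 * y - 2 * ε)..(2 * y + 2 * ε), f x) +
            ∫ x in (y / 2 - ε / 2)..(y / 2 + ε / 2), f x))
      (nhdsWithin 0 (Set.Ioi 0))
      (nhds ((-(y / 2) * f (y / 2) + 4 * y * f (2 * y)) / (f (y / 2) + 4 * f (2 * y)))) ∧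
    (0 < (-(y / 2) * f (y / 2) + 4 * y * f (2 * y)) / (f (y / 2) + 4 * f (2 * y)) ↔
      f (y / 2) < 8 * f (2 * y)) :=
  allocate_second_expected_benefit_general f hf y hy hpos
end

section
/- Let f : ℝ → ℝ be the Rayleigh density f(x) = 8x·exp(−4x²) for x > 0 and f(x) = 0 for x ≤ 0. Then for every y > 0, D_f(y) = y·(8·exp(−3y²) − 1) / (8·exp(−3y²) + 2); moreover D_f(y) > 0 if and only if y < √(ln 2), D_f(y) = 0 if and only if y = √(ln 2), and D_f(y) < 0 if and only if y > √(ln 2). -/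
/-- The doubling-only expected-benefit formula. -/
noncomputable def Df (f : ℝ → ℝ) (y : ℝ) : ℝ :=
  (-(y / 2) * f (y / 2) + 2 * y * f y) / (f (y / 2) + 2 * f y)

/-- The Rayleigh density (Weibull with scale `1/2` and shape `2`). -/
noncomputable def rayleighDensity : ℝ → ℝ := fun x =>
  if 0 < x then 8 * x * Real.exp (-(2 * x) ^ 2) else 0

/-- For the Rayleigh density, the doubling-only expected benefit is
`y (8 e^{-3y²} - 1) / (8 e^{-3y²} + 2)`, and it is positive, zero, or negative
according as `y` is less than, equal to, or greater than `√(ln 2)`. -/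
theorem rayleigh_doubling_only (y : ℝ) (hy : 0 < y) :
    Df rayleighDensity y =
        y * (8 * Real.exp (-3 * y ^ 2) - 1) / (8 * Real.exp (-3 * y ^ 2) + 2) ∧
      (0 < Df rayleighDensity y ↔ y < Real.sqrt (Real.log 2)) ∧
      (Df rayleighDensity y = 0 ↔ y = Real.sqrt (Real.log 2)) ∧
      (Df rayleighDensity y < 0 ↔ Real.sqrt (Real.log 2) < y) := by
  have hy2 : 0 < y / 2 := by linarith
  set a := Real.exp (-(y ^ 2)) with ha
  set b := Real.exp (-3 * y ^ 2) with hb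
  have ha0 : 0 < a := Real.exp_pos _
  have hb0 : 0 < b := Real.exp_pos _
  have hfy2 : rayleighDensity (y / 2) = 4 * y * a := by
    simp only [rayleighDensity, if_pos hy2, ha]
    rw [show (-(2 * (y / 2)) ^ 2 : ℝ) = -(y ^ 2) by ring]
    ring
  have hfy : rayleighDensity y = 8 * y * (b * a) := by
    simp only [rayleighDensity, if_pos hy, hb, ha]
    rw [show (-(2 * y) ^ 2 : ℝ) = (-3 * y ^ 2) + -(y ^ 2) by ring, Real.exp_add]
  have hformula : Df rayleighDensity y = y * (8 * b - 1) / (8 * b + 2) := by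
    rw [Df, hfy2, hfy]
    have hden : (4 * y * a + 2 * (8 * y * (b * a))) ≠ 0 := by positivity
    have hden2 : (8 * b + 2 : ℝ) ≠ 0 := by positivity
    field_simp
    ring
  have hln2 : (0:ℝ) < Real.log 2 := Real.log_pos (by norm_num)
  have h8 : Real.exp (-3 * Real.log 2) = 1 / 8 := by
    rw [show (-3 : ℝ) * Real.log 2 = -Real.log (2 ^ 3) by
        rw [Real.log_pow]; push_cast; ring,
      Real.exp_neg, Real.exp_log (by norm_num)]
    norm_num
  -- key correspondences
  have hsq : y < Real.sqrt (Real.log 2) ↔ y ^ 2 < Real.log 2 :=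
    Real.lt_sqrt hy.le
  have hsq' : Real.sqrt (Real.log 2) < y ↔ Real.log 2 < y ^ 2 :=
    Real.sqrt_lt' hy
  have hsqe : y = Real.sqrt (Real.log 2) ↔ y ^ 2 = Real.log 2 := by
    constructor
    · intro h; rw [h, Real.sq_sqrt hln2.le]
    · intro h; rw [← h, Real.sqrt_sq hy.le]
  have hblt : (1 / 8 : ℝ) < b ↔ y ^ 2 < Real.log 2 := by
    rw [← h8, hb, Real.exp_lt_exp]
    constructor <;> intro h <;> nlinarith
  have hbgt : b < (1 / 8 : ℝ) ↔ Real.log 2 < y ^ 2 := by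
    rw [← h8, hb, Real.exp_lt_exp]
    constructor <;> intro h <;> nlinarith
  have hbeq : b = (1 / 8 : ℝ) ↔ y ^ 2 = Real.log 2 := by
    rw [← h8, hb, Real.exp_eq_exp]
    constructor <;> intro h <;> nlinarith
  have hdenpos : (0:ℝ) < 8 * b + 2 := by positivity
  refine ⟨hformula, ?_, ?_, ?_⟩
  · rw [hformula, hsq, ← hblt, div_pos_iff]
    constructor
    · rintro (⟨h1, _⟩ | ⟨_, h2⟩)
      · nlinarith
      · linarith
    · intro h; left; exact ⟨by nlinarith, hdenpos⟩
  · rw [hformula, hsqe, ← hbeq, div_eq_zero_iff]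
    constructor
    · rintro (h | h)
      · nlinarith
      · linarith
    · intro h; left; nlinarith
  · rw [hformula, hsq', ← hbgt, div_neg_iff]
    constructor
    · rintro (⟨h1, h2⟩ | ⟨h1, _⟩)
      · linarith
      · nlinarith
    · intro h; right; exact ⟨by nlinarith, hdenpos⟩
end

section
/- Let f : ℝ → ℝ be defined by f(x) = 1/(x + 1)² for x > 0 and f(x) = 0 for x ≤ 0. Then for every y > 0, D_f(y) = (2y² + 3y)/(3y² + 8y + 6), and this quantity is strictly positive; hence it is beneficial to switch for every observed amount y > 0. -/
/-- Broome's continuous density `1/(x+1)²` on `x > 0`. -/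
noncomputable def broomeDensity : ℝ → ℝ := fun x =>
  if 0 < x then 1 / (x + 1) ^ 2 else 0

/-- For Broome's continuous density, the doubling-only expected benefit equals
`(2y² + 3y)/(3y² + 8y + 6) > 0` for every `y > 0`: always switch. -/
theorem broome_continuous_switch (y : ℝ) (hy : 0 < y) :
    Df broomeDensity y = (2 * y ^ 2 + 3 * y) / (3 * y ^ 2 + 8 * y + 6) ∧
      0 < Df broomeDensity y := by
  have h2 : (0:ℝ) < y / 2 := by linarith
  have ha : (y / 2 + 1) ≠ 0 := by positivity
  have hb : (y + 1) ≠ 0 := by positivity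
  have hd : (3 * y ^ 2 + 8 * y + 6 : ℝ) ≠ 0 := by positivity
  have heq : Df broomeDensity y = (2 * y ^ 2 + 3 * y) / (3 * y ^ 2 + 8 * y + 6) := by
    simp only [Df, broomeDensity, if_pos hy, if_pos h2]
    rw [div_eq_div_iff]
    · field_simp
      ring
    · have : (0:ℝ) < 1 / (y / 2 + 1) ^ 2 + 2 * (1 / (y + 1) ^ 2) := by positivity
      exact ne_of_gt this
    · exact hd
  refine ⟨heq, ?_⟩
  rw [heq]
  apply div_pos <;> positivity
end

section
/- Let p : ℕ → ℝ satisfy p(0) = 1/12 and p(n) = (1/2)·p(n−1) + 2^{−(2n+1)} for every n ≥ 1. Then for every k ∈ ℕ: p(k) > 0, and (−2^k·p(k) + 2^{k+1}·p(k+1)) / (p(k) + p(k+1)) = 2^{−(k+1)} / (3·p(k) + 2^{−2(k+1)}), which is strictly positive; hence under the doubling-only process it is beneficial to switch for every observed amount 2^{k+1}. -/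
/-- McDonnell–Abbott recurrence distribution: with `p 0 = 1/12` and
`p n = (1/2) p (n-1) + 2^{-(2n+1)}` for `n ≥ 1`, each `p k` is positive, and under
the doubling-only process the expected benefit of switching upon observing
`2^(k+1)`, namely `(-2^k p k + 2^(k+1) p (k+1)) / (p k + p (k+1))`, equals
`2^{-(k+1)} / (3 p k + 2^{-2(k+1)}) > 0`. -/
theorem recurrence_switch (p : ℕ → ℝ) (h0 : p 0 = 1 / 12)
    (hrec : ∀ n : ℕ, 1 ≤ n → p n = (1 / 2) * p (n - 1) + ((2 : ℝ) ^ (2 * n + 1))⁻¹) :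
    ∀ k : ℕ, 0 < p k ∧
      (-(2 : ℝ) ^ k * p k + 2 ^ (k + 1) * p (k + 1)) / (p k + p (k + 1)) =
        ((2 : ℝ) ^ (k + 1))⁻¹ / (3 * p k + ((2 : ℝ) ^ (2 * (k + 1)))⁻¹) ∧
      0 < ((2 : ℝ) ^ (k + 1))⁻¹ / (3 * p k + ((2 : ℝ) ^ (2 * (k + 1)))⁻¹) := by
  have hpos : ∀ k : ℕ, 0 < p k := by
    intro k
    induction k with
    | zero => rw [h0]; norm_num
    | succ n ih =>
      have h := hrec (n + 1) (Nat.le_add_left 1 n)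
      simp only [Nat.add_sub_cancel] at h
      rw [h]
      positivity
  intro k
  have hk := hpos k
  have hk1 := hpos (k + 1)
  have hr := hrec (k + 1) (Nat.le_add_left 1 k)
  simp only [Nat.add_sub_cancel] at hr
  refine ⟨hk, ?_, ?_⟩
  · rw [hr]
    have h1 : (0:ℝ) < p k + ((1 / 2) * p k + ((2 : ℝ) ^ (2 * (k+1) + 1))⁻¹) := by positivity
    have h2 : (0:ℝ) < 3 * p k + ((2 : ℝ) ^ (2 * (k + 1)))⁻¹ := by positivity
    field_simp
    ring
  · positivity
end

section
/- Fix a natural number n ≥ 1 and let f : ℝ → ℝ be defined by f(x) = x^{−n} for x > 0 and f(x) = 0 for x ≤ 0. Then for every y > 0, D_f(y) = y·(2 − 2^{n−1})/(2 + 2ⁿ); consequently D_f(y) > 0 for all y > 0 if n = 1, D_f(y) = 0 for all y > 0 if n = 2, and D_f(y) < 0 for all y > 0 if n ≥ 3. -/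
/-- The (unnormalised) Jeffreys-type prior `x^{-n}` on `x > 0`. -/
noncomputable def jeffreysDensity (n : ℕ) : ℝ → ℝ := fun x =>
  if 0 < x then (x ^ n)⁻¹ else 0

/-- For the Jeffreys-type prior `x^{-n}` under the doubling-only process, the
expected benefit is `y (2 - 2^(n-1)) / (2 + 2ⁿ)`: always switch for `n = 1`,
be indifferent for `n = 2`, and never switch for `n ≥ 3`. -/
theorem jeffreys_switch (n : ℕ) (hn : 1 ≤ n) (y : ℝ) (hy : 0 < y) :
    Df (jeffreysDensity n) y = y * (2 - 2 ^ (n - 1)) / (2 + 2 ^ n) ∧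
      (n = 1 → 0 < Df (jeffreysDensity n) y) ∧
      (n = 2 → Df (jeffreysDensity n) y = 0) ∧
      (3 ≤ n → Df (jeffreysDensity n) y < 0) := by
  have hy2 : 0 < y / 2 := by linarith
  have hyn : (0:ℝ) < y ^ n := pow_pos hy n
  have h1 : jeffreysDensity n (y / 2) = 2 ^ n / y ^ n := by
    simp only [jeffreysDensity, if_pos hy2, div_pow]
    rw [inv_div]
  have h2 : jeffreysDensity n y = (y ^ n)⁻¹ := by
    simp [jeffreysDensity, hy]
  have h2n : (2:ℝ) ^ n = 2 * 2 ^ (n - 1) := by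
    rw [← pow_succ']
    congr 1
    omega
  have key : Df (jeffreysDensity n) y = y * (2 - 2 ^ (n - 1)) / (2 + 2 ^ n) := by
    rw [Df, h1, h2, h2n]
    have hpos : (0:ℝ) < 2 ^ (n - 1) := pow_pos two_pos _
    rw [div_eq_div_iff (by positivity) (by positivity)]
    field_simp
    ring
  have hden : (0:ℝ) < 2 + 2 ^ n := by positivity
  refine ⟨key, ?_, ?_, ?_⟩
  · rintro rfl
    rw [key]
    norm_num
    positivity
  · rintro rfl
    rw [key]
    norm_num
  · intro h3
    rw [key]
    apply div_neg_of_neg_of_pos _ hden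
    have : (4:ℝ) ≤ 2 ^ (n - 1) := by
      calc (4:ℝ) = 2 ^ 2 := by norm_num
      _ ≤ 2 ^ (n - 1) := by
        apply pow_le_pow_right₀ (by norm_num)
        omega
    nlinarith
end
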